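/- arXiv:2007.09705 — 2 statements merged into one kernel-verified Lean document; each statement's English description precedes it below -/
import Mathlib

section
/- Characterization of row 1: for every n, the digit string G(1,n) contains exactly one occurrence of the digit 2 and every digit to the right of that 2 equals 0 (and every digit to its left is 0 or 1); conversely, every digit string whose first digit is not 0, which contains exactly one digit 2 with all digits to the right of the 2 equal to 0 and all digits to the left of the 2 in {0,1}, equals G(1,n) for some n. -/
abbrev Digit := Fin 3

/-- Helper for `addTwo`, acting on the reversed (least significant digit first) string:
replace each digit `d` by `d - 1 (mod 3)` up to and including the first digit 0;
if no digit 0 occurs, a digit 0 is first prepended at the most significant end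
(and then becomes 2). -/
def addTwoAux : List Digit → List Digit
  | [] => [2]
  | d :: rest => if d = 0 then (d + 2) :: rest else (d + 2) :: addTwoAux rest

/-- Adding two in base 3/2: all digits at or to the right of the rightmost 0
(including that 0) are decreased by 1 modulo 3; if there is no 0, a 0 is first
prepended. -/
def addTwo (w : List Digit) : List Digit := (addTwoAux w.reverse).reverse

/-- Binary representation of `j` (digits 0 and 1, most significant first, no leading
zeros), with `binRep 0 = [0]`. -/
def binRep (j : ℕ) : List Digit :=
  if j = 0 then [0] else (Nat.digits 2 j).reverse.map (fun d : ℕ => (Fin.ofNat 3 d : Digit))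

/-- The grid: row 0 consists of the binary representations in increasing order, and
each subsequent row is obtained entrywise by adding two in base 3/2. -/
def G : ℕ → ℕ → List Digit
  | 0, j => binRep j
  | i + 1, j => addTwo (G i j)

/-! Row 0 consists of the binary strings, and adding two to a string `t 0 1…1` (trailing ones)
turns it into `t 2 0…0`, while `1…1` (no zero) becomes `2 0…0`. Every string of row 1
therefore has this shape. Conversely `t 2 0…0` is obtained from `t 0 1…1`, a binary
representation when `t` starts with 1; when `t` is empty one starts instead from `1…1`,
or from `0` for the string `2`. -/

open List

def IsBinary (l : List Digit) : Prop := ∀ d ∈ l, d = 0 ∨ d = 1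

lemma IsBinary.eq_replicate_or_eq_append {l : List Digit} (hl : IsBinary l) :
    (∃ k, l = replicate k 1) ∨ ∃ t k, IsBinary t ∧ l = t ++ 0 :: replicate k 1 := by
  induction l with
  | nil => exact .inl ⟨0, rfl⟩
  | cons d l ih =>
    have hl' : IsBinary l := fun x hx => hl x (mem_cons_of_mem d hx)
    rcases ih hl' with ⟨k, rfl⟩ | ⟨t, k, ht, rfl⟩
    · rcases hl d mem_cons_self with rfl | rfl
      · exact .inr ⟨[], k, by simp [IsBinary], rfl⟩
      · exact .inl ⟨k + 1, rfl⟩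
    · refine .inr ⟨d :: t, k, fun x hx => hl x ?_, rfl⟩
      rcases mem_cons.1 hx with rfl | hx
      · exact mem_cons_self
      · simp [hx]

lemma addTwoAux_replicate_one (k : ℕ) :
    addTwoAux (replicate k 1) = replicate k 0 ++ [2] := by
  induction k with
  | zero => rfl
  | succ k ih => simp [replicate_succ, addTwoAux, ih]

lemma addTwoAux_replicate_one_append_zero_cons (k : ℕ) (t : List Digit) :
    addTwoAux (replicate k 1 ++ 0 :: t) = replicate k 0 ++ 2 :: t := by
  induction k with
  | zero => rfl
  | succ k ih => simp [replicate_succ, addTwoAux, ih]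

lemma addTwo_replicate_one (k : ℕ) : addTwo (replicate k 1) = 2 :: replicate k 0 := by
  simp [addTwo, addTwoAux_replicate_one]

lemma addTwo_append_zero_cons_replicate_one (t : List Digit) (k : ℕ) :
    addTwo (t ++ 0 :: replicate k 1) = t ++ 2 :: replicate k 0 := by
  simp [addTwo, addTwoAux_replicate_one_append_zero_cons]

lemma binRep_isBinary (n : ℕ) : IsBinary (binRep n) := by
  intro d hd
  rcases eq_or_ne n 0 with rfl | hn
  · simp_all [binRep]
  · simp only [binRep, if_neg hn, mem_map, mem_reverse] at hd
    obtain ⟨m, hm, rfl⟩ := hd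
    have : m < 2 := Nat.digits_lt_base (by norm_num) hm
    interval_cases m <;> decide

lemma exists_binRep_eq_one_cons {v : List Digit} (hv : IsBinary v) :
    ∃ n, binRep n = 1 :: v := by
  set L := ((1 :: v).map Fin.val).reverse
  have hL : ∀ m ∈ L, m < 2 := by
    simp only [L, mem_reverse, mem_map, forall_exists_index, and_imp]
    rintro _ d hd rfl
    rcases mem_cons.1 hd with rfl | hd
    · simp
    · rcases hv d hd with rfl | rfl <;> simp
  have hdigits : Nat.digits 2 (Nat.ofDigits 2 L) = L :=
    Nat.digits_ofDigits 2 (by norm_num) L hL (by simp [L])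
  have hne : Nat.ofDigits 2 L ≠ 0 := fun h => by
    rw [h, Nat.digits_zero] at hdigits
    simp [L] at hdigits
  refine ⟨Nat.ofDigits 2 L, ?_⟩
  rw [binRep, if_neg hne, hdigits]
  simp [L, Function.comp_def]
  rfl

lemma G_one_eq_append_two_cons_replicate_zero (n : ℕ) :
    ∃ Y k, IsBinary Y ∧ G 1 n = Y ++ 2 :: replicate k 0 := by
  change ∃ Y k, IsBinary Y ∧ addTwo (binRep n) = _
  rcases (binRep_isBinary n).eq_replicate_or_eq_append with ⟨k, hk⟩ | ⟨t, k, ht, hk⟩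
  · exact ⟨[], k, by simp [IsBinary], by rw [hk, addTwo_replicate_one, nil_append]⟩
  · exact ⟨t, k, ht, by rw [hk, addTwo_append_zero_cons_replicate_one]⟩

lemma exists_G_one_eq_append_two_cons_replicate_zero {Y : List Digit} (hY : IsBinary Y)
    (hhead : Y.head? ≠ some 0) (k : ℕ) : ∃ n, G 1 n = Y ++ 2 :: replicate k 0 := by
  change ∃ n, addTwo (binRep n) = _
  rcases Y with _ | ⟨y, Y⟩
  · rcases k with _ | k
    · exact ⟨0, rfl⟩
    · obtain ⟨n, hn⟩ := exists_binRep_eq_one_cons (v := replicate k 1) (by simp [IsBinary])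
      exact ⟨n, by rw [hn, ← replicate_succ, addTwo_replicate_one, nil_append]⟩
  · obtain rfl : y = 1 := (hY y mem_cons_self).resolve_left (by simpa using hhead)
    obtain ⟨n, hn⟩ := exists_binRep_eq_one_cons (v := Y ++ 0 :: replicate k 1) <| by
      intro d hd
      simp only [mem_append, mem_cons, mem_replicate] at hd
      rcases hd with hd | rfl | ⟨-, rfl⟩
      exacts [hY d (mem_cons_of_mem 1 hd), .inl rfl, .inr rfl]
    exact ⟨n, by rw [hn, ← cons_append, addTwo_append_zero_cons_replicate_one]⟩

/-- Characterization of row 1: every entry of row 1 consists of a (possibly empty)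
string of digits 0 and 1, followed by exactly one digit 2, followed by a (possibly
empty) string of zeros; conversely every such digit string not starting with the
digit 0 is an entry of row 1. -/
theorem row_one_characterization :
    (∀ n : ℕ, ∃ Y Z : List Digit,
      G 1 n = Y ++ [2] ++ Z ∧ (∀ d ∈ Y, d = 0 ∨ d = 1) ∧ (∀ d ∈ Z, d = 0)) ∧
    (∀ w : List Digit, w.head? ≠ some 0 →
      (∃ Y Z : List Digit,
        w = Y ++ [2] ++ Z ∧ (∀ d ∈ Y, d = 0 ∨ d = 1) ∧ (∀ d ∈ Z, d = 0)) →
      ∃ n : ℕ, G 1 n = w) := by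
  refine ⟨fun n => ?_, ?_⟩
  · obtain ⟨Y, k, hY, hn⟩ := G_one_eq_append_two_cons_replicate_zero n
    exact ⟨Y, replicate k 0, by simp [hn], hY, fun _ => eq_of_mem_replicate⟩
  · rintro w hw ⟨Y, Z, rfl, hY, hZ⟩
    obtain ⟨k, rfl⟩ : ∃ k, Z = replicate k 0 := ⟨_, eq_replicate_of_mem hZ⟩
    have hhead : Y.head? ≠ some 0 := by cases Y <;> simp_all
    simpa using exists_G_one_eq_append_two_cons_replicate_zero hY hhead k
end

section
/- Inductive step for rows of the form 3a+2: let a ≥ 0, and suppose that every row k < 3a+2 dominates all later rows. Then row 3a+2 dominates all later rows. -/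
/-- Base-3 value of a digit string (most significant digit first). -/
def val3 (w : List Digit) : ℕ := w.foldl (fun acc d => 3 * acc + d.val) 0

/-- Row `j` dominates all later rows: every entry of any row below row `j`,
interpreted in base 3, is the last term of a nondegenerate three-term arithmetic
progression whose first two terms are entries of row `j` interpreted in base 3. -/
def Dominates (j : ℕ) : Prop :=
  ∀ i n : ℕ, j < i → ∃ p q : ℕ,
    val3 (G j p) < val3 (G j q) ∧ val3 (G j q) < val3 (G i n) ∧
    val3 (G j p) + val3 (G i n) = 2 * val3 (G j q)

lemma val3_append (w : List Digit) (d : Digit) : val3 (w ++ [d]) = 3 * val3 w + d.val := by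
  simp [val3, List.foldl_append]

lemma val3_zero_cons (w : List Digit) : val3 ((0 : Digit) :: w) = val3 w := by
  simp [val3]

lemma addTwo_append (w : List Digit) (d : Digit) :
    addTwo (w ++ [d]) = addTwo^[(2 + d.val) / 3] w ++ [d + 2] := by
  fin_cases d <;> simp [addTwo, addTwoAux]

lemma addTwo_iterate_append (k : ℕ) (w : List Digit) (d : Digit) :
    addTwo^[k] (w ++ [d]) = addTwo^[(2 * k + d.val) / 3] w ++ [Fin.ofNat 3 (2 * k + d.val)] := by
  induction k generalizing w d with
  | zero => simp [Nat.div_eq_of_lt d.isLt]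
  | succ k ih =>
    rw [Function.iterate_succ_apply, addTwo_append, ih, ← Function.iterate_add_apply]
    have hd := d.isLt
    congr 2
    · simp only [Fin.val_add]
      omega
    · ext
      simp only [Fin.val_ofNat, Fin.val_add]
      omega

lemma binRep_lt_two {b : ℕ} (hb : b < 2) : binRep b = [Fin.ofNat 3 b] := by
  interval_cases b <;> decide

lemma binRep_two_mul_add {j b : ℕ} (hj : j ≠ 0) (hb : b < 2) :
    binRep (2 * j + b) = binRep j ++ [Fin.ofNat 3 b] := by
  unfold binRep
  rw [if_neg (by omega), if_neg hj, Nat.digits_def' (by norm_num) (by omega)]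
  simp [Nat.mul_add_div, Nat.mod_eq_of_lt hb, Nat.div_eq_of_lt hb]

lemma addTwoAux_append_zero (l : List Digit) :
    addTwoAux (l ++ [0]) = addTwoAux l ++ [0] ∨ addTwoAux (l ++ [0]) = addTwoAux l := by
  induction l with
  | nil => simp [addTwoAux]
  | cons d l ih =>
    by_cases hd : d = 0
    · simp [addTwoAux, hd]
    · rcases ih with h | h <;> simp [addTwoAux, hd, h]

-- The second case occurs when `w` has no digit 0: the leading 0 is then the one `addTwo` prepends.
lemma addTwo_zero_cons (w : List Digit) :
    addTwo (0 :: w) = 0 :: addTwo w ∨ addTwo (0 :: w) = addTwo w := by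
  rcases addTwoAux_append_zero w.reverse with h | h <;> simp [addTwo, h]

lemma val3_addTwo_iterate_zero_cons (k : ℕ) (w : List Digit) :
    val3 (addTwo^[k] (0 :: w)) = val3 (addTwo^[k] w) := by
  induction k generalizing w with
  | zero => exact val3_zero_cons w
  | succ k ih =>
    simp only [Function.iterate_succ_apply]
    rcases addTwo_zero_cons w with h | h <;> rw [h]
    exact ih (addTwo w)

lemma G_eq_addTwo_iterate (i j : ℕ) : G i j = addTwo^[i] (binRep j) := by
  induction i with
  | zero => rfl
  | succ i ih => rw [Function.iterate_succ_apply', ← ih]; rfl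

lemma val3_G_two_mul_add (i j : ℕ) {b : ℕ} (hb : b < 2) :
    val3 (G i (2 * j + b)) = 3 * val3 (G ((2 * i + b) / 3) j) + (2 * i + b) % 3 := by
  have hbin : val3 (addTwo^[i] (binRep (2 * j + b))) =
      val3 (addTwo^[i] (binRep j ++ [Fin.ofNat 3 b])) := by
    rcases eq_or_ne j 0 with rfl | hj
    · rw [mul_zero, zero_add, binRep_lt_two hb]
      exact (val3_addTwo_iterate_zero_cons i _).symm
    · rw [binRep_two_mul_add hj hb]
  rw [G_eq_addTwo_iterate, G_eq_addTwo_iterate, hbin, addTwo_iterate_append, val3_append,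
    Fin.val_ofNat, Fin.val_ofNat, Nat.mod_eq_of_lt (by omega : b < 3)]

lemma val3_G_three_mul_add_two (a p : ℕ) {e : ℕ} (he : e < 2) :
    val3 (G (3 * a + 2) (2 * p + e)) = 3 * val3 (G (2 * a + 1) p) + (e + 1) := by
  rw [val3_G_two_mul_add _ _ he, show (2 * (3 * a + 2) + e) / 3 = 2 * a + 1 by omega,
    show (2 * (3 * a + 2) + e) % 3 = e + 1 by omega]

lemma exists_threeAP_mul_three_add {x y z c : ℕ} (hc : c < 3) (hyz : y < z)
    (hxz : x + z = 2 * y) :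
    ∃ e f, e < 2 ∧ f < 2 ∧ 3 * x + (e + 1) < 3 * y + (f + 1) ∧ 3 * y + (f + 1) < 3 * z + c ∧
      3 * x + (e + 1) + (3 * z + c) = 2 * (3 * y + (f + 1)) := by
  interval_cases c
  · exact ⟨1, 0, by omega⟩
  · exact ⟨0, 0, by omega⟩
  · exact ⟨1, 1, by omega⟩

/-- Inductive step for rows of the form `3a + 2`: if every row `k < 3a + 2` dominates
all later rows, then row `3a + 2` dominates all later rows. -/
theorem row_3a2_step (a : ℕ)
    (ih : ∀ k : ℕ, k < 3 * a + 2 → Dominates k) : Dominates (3 * a + 2) := by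
  intro i n hi
  obtain ⟨m, b, hb, rfl⟩ : ∃ m b, b < 2 ∧ n = 2 * m + b :=
    ⟨n / 2, n % 2, Nat.mod_lt n two_pos, (Nat.div_add_mod n 2).symm⟩
  obtain ⟨p, q, -, hq, hAP⟩ := ih (2 * a + 1) (by omega) ((2 * i + b) / 3) m (by omega)
  obtain ⟨e, f, he, hf, hAP'⟩ :=
    exists_threeAP_mul_three_add (Nat.mod_lt (2 * i + b) three_pos) hq hAP
  refine ⟨2 * p + e, 2 * q + f, ?_⟩
  rwa [val3_G_three_mul_add_two a p he, val3_G_three_mul_add_two a q hf,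
    val3_G_two_mul_add i m hb]
end
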